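/- Let kp, γp, γr > 0, k1, k2 ∈ ℝ and q ≥ 0, and let H(s) = kp(k1·s + k2)/(s(s + γr)(s + γp)). Then for every real ω ≠ 0, the Popov inequality Re[(1 + q·iω)·H(iω)] > −1 holds if and only if ω⁴ + z1(q)·ω² + z0(q) > 0, where z0(q) = γr²γp² + kp[γr(γp·k1 − k2 + γp·k2·q) − γp·k2] and z1(q) = γp² + γr² + kp[(k1(γp + γr) − k2)·q − k1]. -/

import Mathlib

/-!
On the imaginary axis `|iω (iω + γr) (iω + γp)|² = ω² (ω² + γr²) (ω² + γp²)`, and expanding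
`Re[(1 + q iω) kp (k1 iω + k2) · conj(iω (iω + γr) (iω + γp))]` shows that
`Re[(1 + q iω) H(iω)] + 1 = (ω⁴ + z1(q) ω² + z0(q)) / ((ω² + γr²)(ω² + γp²))`.
The denominator is positive for `ω ≠ 0`, so the Popov inequality is the sign condition on the
quartic.
-/

open Complex

theorem normSq_I_mul_ofReal_add_ofReal (ω γ : ℝ) : normSq (I * ω + γ) = ω ^ 2 + γ ^ 2 := by
  rw [add_comm, mul_comm, normSq_add_mul_I, add_comm]

theorem popov_re_add_one_eq_div (kp γp γr k1 k2 q : ℝ) {ω : ℝ} (hω : ω ≠ 0) :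
    ((1 + (q : ℂ) * I * ω) * (kp * (k1 * (I * ω) + k2) /
        (I * ω * (I * ω + γr) * (I * ω + γp)))).re + 1 =
      (ω ^ 4 + (γp ^ 2 + γr ^ 2 + kp * ((k1 * (γp + γr) - k2) * q - k1)) * ω ^ 2 +
        (γr ^ 2 * γp ^ 2 + kp * (γr * (γp * k1 - k2 + γp * k2 * q) - γp * k2))) /
        ((ω ^ 2 + γr ^ 2) * (ω ^ 2 + γp ^ 2)) := by
  have hnormSq : normSq (I * ω * (I * ω + γr) * (I * ω + γp)) =
      ω ^ 2 * ((ω ^ 2 + γr ^ 2) * (ω ^ 2 + γp ^ 2)) := by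
    simp only [map_mul, normSq_I_mul_ofReal_add_ofReal, normSq_I, normSq_ofReal]
    ring
  have hpos : 0 < (ω ^ 2 + γr ^ 2) * (ω ^ 2 + γp ^ 2) := by positivity
  rw [← mul_div_assoc, div_re, hnormSq]
  simp only [mul_re, mul_im, add_re, add_im, one_re, one_im, I_re, I_im, ofReal_re, ofReal_im]
  field_simp
  ring

theorem stmt4 (kp γp γr k1 k2 q : ℝ) (ω : ℝ) (hω : ω ≠ 0) :
    (((1 + (q : ℂ) * Complex.I * (ω : ℂ)) *
        ((kp : ℂ) * ((k1 : ℂ) * (Complex.I * (ω : ℂ)) + (k2 : ℂ)) /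
          ((Complex.I * (ω : ℂ)) * (Complex.I * (ω : ℂ) + (γr : ℂ)) *
            (Complex.I * (ω : ℂ) + (γp : ℂ))))).re > -1) ↔
      ω ^ 4 + (γp ^ 2 + γr ^ 2 + kp * ((k1 * (γp + γr) - k2) * q - k1)) * ω ^ 2 +
        (γr ^ 2 * γp ^ 2 + kp * (γr * (γp * k1 - k2 + γp * k2 * q) - γp * k2)) > 0 := by
  rw [gt_iff_lt, neg_lt_iff_pos_add, popov_re_add_one_eq_div kp γp γr k1 k2 q hω]
  exact div_pos_iff_of_pos_right (by positivity)
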